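/- Let n be a positive integer, G a subgroup of S_n acting on ℕ^n on positions, and d ≥ 0. Call a vector 'tested' if it is the root (0,…,0) or a child of a canonical vector. Then the number of tested vectors of degree at most d minus the number of canonical vectors of degree at most d is bounded above by the number of non-canonical vectors of degree exactly d; i.e., Σ_{i=0}^{d} T(i) − Σ_{i=0}^{d} C(i) ≤ C̄(d), where T(i), C(i), C̄(i) denote respectively the number of tested, canonical, and non-canonical vectors of degree i. -/

import Mathlib

variable {n : ℕ}

/-- Action of a permutation on integer vectors, on positions: `(σ·v)_i = v_{σ⁻¹(i)}`. -/
def act (σ : Equiv.Perm (Fin n)) (v : Fin n → ℕ) : Fin n → ℕ := fun i => v (σ⁻¹ i)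

/-- `v` is canonical under `G` if it is the lexicographically greatest element of its orbit. -/
def IsCanonical (G : Subgroup (Equiv.Perm (Fin n))) (v : Fin n → ℕ) : Prop :=
  ∀ σ ∈ G, toLex (act σ v) ≤ toLex v

/-- Position of the last nonzero entry of `v` (position `0` if `v = 0`). -/
def lastNZ [NeZero n] (v : Fin n → ℕ) : Fin n :=
  if h : v = 0 then 0
  else ((Finset.univ : Finset (Fin n)).filter fun i => v i ≠ 0).max'
    (by obtain ⟨i, hi⟩ := Function.ne_iff.mp h
        exact ⟨i, Finset.mem_filter.mpr ⟨Finset.mem_univ i, hi⟩⟩)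

/-- The father of a vector: decrement its last nonzero entry (fixes the zero vector). -/
def father [NeZero n] (v : Fin n → ℕ) : Fin n → ℕ :=
  Function.update v (lastNZ v) (v (lastNZ v) - 1)

/-- The children of a vector: increment the last nonzero entry, or set a later entry to 1. -/
def children [NeZero n] (v : Fin n → ℕ) : Set (Fin n → ℕ) :=
  insert (Function.update v (lastNZ v) (v (lastNZ v) + 1))
    {w | ∃ j : Fin n, lastNZ v < j ∧ w = Function.update v j 1}

/-- A vector is tested by the orderly generation strategy if it is the root or a
child of a canonical vector. -/
def Tested [NeZero n] (G : Subgroup (Equiv.Perm (Fin n))) (v : Fin n → ℕ) : Prop :=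
  v = 0 ∨ ∃ u : Fin n → ℕ, IsCanonical G u ∧ v ∈ children u

/-!
Lexicographic maximality in an orbit survives lowering the last nonzero entry of a canonical
vector `v`: more generally it passes to every `u ≤ v` that agrees with `v` before the last nonzero
position `j` of `v`. Indeed, an image `σ·u >lex u` has the same degree as `u`, so it must already
beat `u` at a position before `j`, where `u` and `v` agree, and then `σ·v ≥ σ·u >lex v`.

Consequently a tested, non-canonical vector `v` of degree `i ≤ d` has a canonical father, and
raising its last nonzero entry by `d - i` gives a non-canonical vector of degree `d`. Two vectors
with the same image lie on one chain obtained by varying the last nonzero entry; the higher one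
has a canonical father lying above the lower one on that chain, which forces the lower one to be
canonical. So this map injects the tested non-canonical vectors of degree at most `d` into the
non-canonical vectors of degree `d`.
-/

lemma act_mono (σ : Equiv.Perm (Fin n)) {u v : Fin n → ℕ} (h : u ≤ v) :
    act σ u ≤ act σ v :=
  fun i => h (σ⁻¹ i)

lemma sum_act (σ : Equiv.Perm (Fin n)) (v : Fin n → ℕ) : ∑ i, act σ v i = ∑ i, v i :=
  Equiv.sum_comp σ⁻¹ v

lemma isCanonical_zero (G : Subgroup (Equiv.Perm (Fin n))) : IsCanonical G 0 :=
  fun _ _ => le_rfl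

theorem IsCanonical.of_le {G : Subgroup (Equiv.Perm (Fin n))} {u v : Fin n → ℕ} {j : Fin n}
    (hv : IsCanonical G v) (hle : u ≤ v) (hbelow : ∀ i < j, u i = v i)
    (hzero : ∀ i, j < i → v i = 0) : IsCanonical G u := by
  intro σ hσ
  by_contra! hlt
  obtain ⟨p, hagree, hp⟩ := hlt
  -- otherwise `u ≤ σ·u` pointwise, strictly at `p`, although both have the same degree
  obtain ⟨i, hpi, hui⟩ : ∃ i, p < i ∧ u i ≠ 0 := by
    by_contra! htail
    have hsum : ∑ i, u i < ∑ i, act σ u i := by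
      refine Finset.sum_lt_sum (fun i _ => ?_) ⟨p, Finset.mem_univ p, hp⟩
      rcases lt_trichotomy i p with h | rfl | h
      · exact (hagree i h).le
      · exact hp.le
      · simp [htail i h]
    exact (sum_act σ u ▸ hsum).false
  have hpj : p < j := hpi.trans_le <| not_lt.1 fun hji => hui <| by
    simpa [hzero i hji] using hle i
  have hvu : toLex v < toLex (act σ u) :=
    ⟨p, fun k hk => (hbelow k (hk.trans hpj)).symm.trans (hagree k hk),
      show v p < act σ u p from hbelow p hpj ▸ hp⟩
  exact (hvu.trans_le ((Pi.toLex_monotone (act_mono σ hle)).trans (hv σ hσ))).false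

section LastNonzero

variable [NeZero n]

lemma le_lastNZ {v : Fin n → ℕ} {i : Fin n} (h : v i ≠ 0) : i ≤ lastNZ v := by
  have hv : v ≠ 0 := fun h0 => h (by simp [h0])
  rw [lastNZ, dif_neg hv]
  exact Finset.le_max' _ _ (by simpa using h)

lemma apply_lastNZ_ne_zero {v : Fin n → ℕ} (hv : v ≠ 0) : v (lastNZ v) ≠ 0 := by
  rw [lastNZ, dif_neg hv]
  exact (Finset.mem_filter.mp (Finset.max'_mem (Finset.univ.filter fun i => v i ≠ 0) _)).2

lemma apply_eq_zero_of_lastNZ_lt {v : Fin n → ℕ} {i : Fin n} (h : lastNZ v < i) : v i = 0 := by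
  by_contra hi
  exact (le_lastNZ hi).not_gt h

lemma lastNZ_eq_of {v : Fin n → ℕ} {j : Fin n} (hj : v j ≠ 0)
    (htail : ∀ i, j < i → v i = 0) : lastNZ v = j :=
  (le_lastNZ hj).antisymm' <| not_lt.1 fun h =>
    apply_lastNZ_ne_zero (fun h0 => hj (by simp [h0])) (htail _ h)

lemma lastNZ_update {v : Fin n → ℕ} {j : Fin n} {c : ℕ} (hj : lastNZ v ≤ j) (hc : c ≠ 0) :
    lastNZ (Function.update v j c) = j :=
  lastNZ_eq_of (by simpa using hc) fun i hi => by
    rw [Function.update_of_ne hi.ne']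
    exact apply_eq_zero_of_lastNZ_lt (hj.trans_lt hi)

lemma father_update {v : Fin n → ℕ} {j : Fin n} {c : ℕ} (hj : lastNZ v ≤ j) (hc : c ≠ 0) :
    father (Function.update v j c) = Function.update v j (c - 1) := by
  rw [father, lastNZ_update hj hc, Function.update_self, Function.update_idem]

lemma father_of_mem_children {u w : Fin n → ℕ} (h : w ∈ children u) : father w = u := by
  rcases h with rfl | ⟨j, hj, rfl⟩
  · rw [father_update le_rfl (Nat.add_one_ne_zero _), Nat.add_sub_cancel,
      Function.update_eq_self]
  · rw [father_update hj.le one_ne_zero, Nat.sub_self, ← apply_eq_zero_of_lastNZ_lt hj,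
      Function.update_eq_self]

lemma Tested.isCanonical_father {G : Subgroup (Equiv.Perm (Fin n))} {w : Fin n → ℕ}
    (h : Tested G w) (hw : w ≠ 0) : IsCanonical G (father w) := by
  rcases h with h | ⟨u, hu, hc⟩
  · exact absurd h hw
  · rwa [father_of_mem_children hc]

lemma Tested.isCanonical_of_lt {G : Subgroup (Equiv.Perm (Fin n))} {u w : Fin n → ℕ}
    (h : Tested G w) (hw : w ≠ 0) (hoff : ∀ i ≠ lastNZ w, u i = w i)
    (hlt : u (lastNZ w) < w (lastNZ w)) : IsCanonical G u := by
  refine (h.isCanonical_father hw).of_le (j := lastNZ w) (fun i => ?_) (fun i hi => ?_)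
    (fun i hi => ?_)
  · by_cases hi : i = lastNZ w
    · subst hi
      simp only [father, Function.update_self]
      omega
    · simp [father, hoff i hi, hi]
  · simp [father, hoff i hi.ne, hi.ne]
  · simp [father, hi.ne', apply_eq_zero_of_lastNZ_lt hi]

def raiseLast (v : Fin n → ℕ) (k : ℕ) : Fin n → ℕ :=
  v + Pi.single (lastNZ v) k

lemma raiseLast_apply_of_ne (v : Fin n → ℕ) (k : ℕ) {i : Fin n} (hi : i ≠ lastNZ v) :
    raiseLast v k i = v i := by
  simp [raiseLast, hi]

lemma sum_raiseLast (v : Fin n → ℕ) (k : ℕ) : ∑ i, raiseLast v k i = ∑ i, v i + k := by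
  simp [raiseLast, Finset.sum_add_distrib]

lemma lastNZ_raiseLast {v : Fin n → ℕ} (hv : v ≠ 0) (k : ℕ) :
    lastNZ (raiseLast v k) = lastNZ v :=
  lastNZ_eq_of (by simp [raiseLast, apply_lastNZ_ne_zero hv]) fun i hi => by
    rw [raiseLast_apply_of_ne v k hi.ne']
    exact apply_eq_zero_of_lastNZ_lt hi

lemma IsCanonical.of_raiseLast {G : Subgroup (Equiv.Perm (Fin n))} {v : Fin n → ℕ} {k : ℕ}
    (h : IsCanonical G (raiseLast v k)) : IsCanonical G v :=
  h.of_le (j := lastNZ v) le_self_add (fun i hi => (raiseLast_apply_of_ne v k hi.ne).symm)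
    fun i hi => by rw [raiseLast_apply_of_ne v k hi.ne', apply_eq_zero_of_lastNZ_lt hi]

lemma eq_of_raiseLast_eq {G : Subgroup (Equiv.Perm (Fin n))} {v w : Fin n → ℕ} {a b : ℕ}
    (hv : Tested G v) (hw : Tested G w) (hvc : ¬ IsCanonical G v) (hwc : ¬ IsCanonical G w)
    (h : raiseLast v a = raiseLast w b) : v = w := by
  have hv0 : v ≠ 0 := by rintro rfl; exact hvc (isCanonical_zero G)
  have hw0 : w ≠ 0 := by rintro rfl; exact hwc (isCanonical_zero G)
  have hj : lastNZ v = lastNZ w := by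
    rw [← lastNZ_raiseLast hv0 a, h, lastNZ_raiseLast hw0 b]
  have hoff : ∀ i ≠ lastNZ w, v i = w i := fun i hi => by
    rw [← raiseLast_apply_of_ne v a (hj ▸ hi), h, raiseLast_apply_of_ne w b hi]
  rcases lt_trichotomy (v (lastNZ w)) (w (lastNZ w)) with hlt | hlast | hgt
  · exact absurd (hw.isCanonical_of_lt hw0 hoff hlt) hvc
  · funext i
    by_cases hi : i = lastNZ w
    · rw [hi, hlast]
    · exact hoff i hi
  · refine absurd (hv.isCanonical_of_lt hv0 (fun i hi => (hoff i (hj ▸ hi)).symm) ?_) hwc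
    rwa [hj]

end LastNonzero

lemma finite_setOf_sum_le (d : ℕ) : {v : Fin n → ℕ | ∑ i, v i ≤ d}.Finite :=
  (Set.finite_Iic fun _ => d).subset fun _ hv i =>
    (Finset.single_le_sum (fun _ _ => Nat.zero_le _) (Finset.mem_univ i)).trans hv

lemma sum_range_ncard_eq_ncard {α : Type*} (P : α → Prop) (f : α → ℕ) (d : ℕ)
    (hfin : {a | f a ≤ d}.Finite) :
    ∑ i ∈ Finset.range (d + 1), {a | P a ∧ f a = i}.ncard =
      {a | P a ∧ f a ≤ d}.ncard := by
  set I : Set ℕ := ↑(Finset.range (d + 1))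
  have hunion : {a | P a ∧ f a ≤ d} = ⋃ i ∈ I, {a | P a ∧ f a = i} := by
    ext a
    simp [I]
  have hfinite : ∀ i ∈ I, {a | P a ∧ f a = i}.Finite :=
    fun i hi => hfin.subset fun a ha => by simpa [I, ha.2, Nat.lt_succ_iff] using hi
  have hdisj : I.PairwiseDisjoint fun i => {a | P a ∧ f a = i} :=
    fun i _ k _ hik => Set.disjoint_left.2 fun a hi hk => hik (hi.2.symm.trans hk.2)
  rw [hunion, (Finset.range (d + 1)).finite_toSet.ncard_biUnion hfinite hdisj,
    finsum_mem_coe_finset]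

/-- `Σ_{i≤d} T(i) − Σ_{i≤d} C(i) ≤ C̄(d)`: the number of tested vectors of degree at
most `d` exceeds the number of canonical vectors of degree at most `d` by at most the
number of non-canonical vectors of degree exactly `d`. -/
theorem stmt8 (n : ℕ) [NeZero n] (G : Subgroup (Equiv.Perm (Fin n))) (d : ℕ) :
    (∑ i ∈ Finset.range (d + 1),
        {v : Fin n → ℕ | Tested G v ∧ ∑ j, v j = i}.ncard) -
      (∑ i ∈ Finset.range (d + 1),
        {v : Fin n → ℕ | IsCanonical G v ∧ ∑ j, v j = i}.ncard) ≤
    {v : Fin n → ℕ | ¬ IsCanonical G v ∧ ∑ j, v j = d}.ncard := by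
  have hfin := finite_setOf_sum_le (n := n) d
  rw [sum_range_ncard_eq_ncard _ _ d hfin, sum_range_ncard_eq_ncard _ _ d hfin]
  refine (Set.le_ncard_sdiff _ _ (hfin.subset fun v hv => hv.2)).trans ?_
  refine Set.ncard_le_ncard_of_injOn (fun v => raiseLast v (d - ∑ j, v j)) ?_ ?_
    (hfin.subset fun v hv => hv.2.le)
  · rintro v ⟨⟨-, hvd⟩, hvc⟩
    exact ⟨fun h => hvc ⟨h.of_raiseLast, hvd⟩, by rw [sum_raiseLast]; omega⟩
  · rintro v ⟨⟨hv, hvd⟩, hvc⟩ w ⟨⟨hw, hwd⟩, hwc⟩ h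
    exact eq_of_raiseLast_eq hv hw (fun h => hvc ⟨h, hvd⟩) (fun h => hwc ⟨h, hwd⟩) h
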